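/- For every λ ∈ [0, (n-1)/2] and every r > 1, ω_{iλ}^{(n)}(a_r) ≥ C sinh(λ r)/(λ sinh(r)^{(n-1)/2}), where C = a_n e^{-(n-1)/2} (1 - 2e^{-1})^{(n-3)/2} and a_n = 2^{(n-1)/2}/B((n-1)/2, 1/2). (For λ = 0 the ratio sinh(λr)/λ is interpreted as r.) -/

import Mathlib

open intervalIntegral Real

/-- The real Beta function `B(x,y) = Γ(x)Γ(y)/Γ(x+y)`. -/
noncomputable def realBeta (x y : ℝ) : ℝ :=
  Real.Gamma x * Real.Gamma y / Real.Gamma (x + y)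

/-- The normalizing constant `a_n = 2^{(n-1)/2}/B((n-1)/2, 1/2)`. -/
noncomputable def aconst (n : ℕ) : ℝ :=
  (2:ℝ) ^ (((n:ℝ) - 1) / 2) / realBeta (((n:ℝ) - 1) / 2) (1/2)

/-- The spherical function `ω_{iλ}^{(n)}(a_r)` of imaginary parameter on
`n`-dimensional real hyperbolic space. -/
noncomputable def sphFnI (n : ℕ) (lam r : ℝ) : ℝ :=
  aconst n * Real.sinh r ^ ((2:ℝ) - n) *
    ∫ s in (0:ℝ)..r, (Real.cosh r - Real.cosh s) ^ (((n:ℝ) - 3) / 2) * Real.cosh (lam * s)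

/-!
Write `p = (n - 3) / 2` and `q = p + 1 = (n - 1) / 2`. For `r ≥ 1` and `0 ≤ s ≤ r`,
`cosh r - cosh s = eʳ (1 - e^{-(r-s)}) (1 - e^{-(r+s)}) / 2 ≥ sinh r (1 - e⁻¹) (1 - e^{-(r-s)})`,
which is at least `sinh r (1 - e⁻¹)²` on `[0, r - 1]` and, by concavity of `1 - e^{-t}`, at least
`sinh r (1 - e⁻¹)² (r - s)` on `[r - 1, r]`. Integrating over the two pieces,
`∫₀^r (cosh r - cosh s)^p cosh (λs) ds ≥ (sinh r (1 - e⁻¹)²)^p B` with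
`B = ∫₀^{r-1} cosh (λs) ds + cosh (λ(r-1)) / q`.
On `[r - 1, r]` we have `cosh (λs) ≤ cosh (λ(r-1)) e^{q(s-r+1)}` because `λ ≤ q`, so `B`
dominates `e^{-q} ∫₀^r cosh (λs) ds`; finally `1 - 2e⁻¹ ≤ (1 - e⁻¹)²`.
-/

theorem sinh_mul_one_sub_exp_le_cosh_sub_cosh {r s : ℝ} (hsr : s ≤ r) (hrs : 1 ≤ r + s) :
    sinh r * (1 - exp (-1)) * (1 - exp (-(r - s))) ≤ cosh r - cosh s := by
  have hfactor : cosh r - cosh s = exp r * (1 - exp (-(r - s))) * (1 - exp (-(r + s))) / 2 := by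
    simp only [cosh_eq, mul_sub, mul_one, ← exp_add, sub_mul]
    ring_nf
  have hsinh : sinh r ≤ exp r / 2 := by
    rw [sinh_eq]; linarith [exp_pos (-r)]
  have hgap : 0 ≤ 1 - exp (-(r - s)) := by
    rw [sub_nonneg, exp_le_one_iff]; linarith
  have hsum : 1 - exp (-1) ≤ 1 - exp (-(r + s)) :=
    sub_le_sub_left (exp_le_exp.2 (by linarith)) 1
  have hc : 0 ≤ 1 - exp (-1) := sub_nonneg.2 (exp_le_one_iff.2 (by norm_num))
  rw [hfactor]
  calc sinh r * (1 - exp (-1)) * (1 - exp (-(r - s)))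
      ≤ exp r / 2 * (1 - exp (-(r + s))) * (1 - exp (-(r - s))) := by
        gcongr
    _ = _ := by ring

theorem one_sub_exp_neg_one_mul_le_one_sub_exp_neg {t : ℝ} (h0 : 0 ≤ t) (h1 : t ≤ 1) :
    (1 - exp (-1)) * t ≤ 1 - exp (-t) := by
  have h := convexOn_exp.2 (Set.mem_univ 0) (Set.mem_univ (-1)) (sub_nonneg.2 h1) h0 (by ring)
  simp only [smul_eq_mul, mul_zero, mul_neg_one, zero_add, exp_zero] at h
  linarith

theorem cosh_add_le_cosh_mul_exp (u : ℝ) {v : ℝ} (hv : 0 ≤ v) :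
    cosh (u + v) ≤ cosh u * exp v := by
  rw [cosh_add, ← cosh_add_sinh v, mul_add]
  gcongr
  exact (sinh_lt_cosh u).le

theorem integral_cosh_mul (lam r : ℝ) :
    ∫ s in (0:ℝ)..r, cosh (lam * s) = if lam = 0 then r else sinh (lam * r) / lam := by
  split_ifs with h
  · simp [h]
  · rw [integral_comp_mul_left (fun s => cosh s) h, integral_deriv_eq_sub' sinh Real.deriv_sinh
      (fun _ _ => differentiableAt_sinh) continuous_cosh.continuousOn]
    simp [div_eq_inv_mul]

theorem integral_sub_rpow {p : ℝ} (hp : -1 < p) (r : ℝ) :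
    ∫ s in (r - 1)..r, (r - s) ^ p = 1 / (p + 1) := by
  rw [integral_comp_sub_left (fun x => x ^ p) r, sub_self, sub_sub_cancel,
    integral_rpow (Or.inl hp), one_rpow, zero_rpow (by linarith)]
  ring

theorem integral_exp_mul_sub {q : ℝ} (hq : q ≠ 0) (r : ℝ) :
    ∫ s in (r - 1)..r, exp (q * (s - r)) = (1 - exp (-q)) / q := by
  simp only [mul_sub]
  rw [integral_comp_mul_sub (fun x => exp x) hq, integral_exp]
  simp [mul_sub, div_eq_inv_mul]

theorem exp_neg_mul_integral_cosh_mul_le {lam q r : ℝ} (hq : 0 < q) (hlam0 : 0 ≤ lam)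
    (hlam : lam ≤ q) (hr : 1 ≤ r) :
    exp (-q) * ∫ s in (0:ℝ)..r, cosh (lam * s)
      ≤ (∫ s in (0:ℝ)..(r - 1), cosh (lam * s)) + cosh (lam * (r - 1)) / q := by
  have hint : ∀ a b : ℝ, IntervalIntegrable (fun s => cosh (lam * s)) MeasureTheory.volume a b :=
    fun a b => (by fun_prop : Continuous fun s => cosh (lam * s)).intervalIntegrable a b
  have hhead : exp (-q) * ∫ s in (0:ℝ)..(r - 1), cosh (lam * s)
      ≤ ∫ s in (0:ℝ)..(r - 1), cosh (lam * s) :=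
    mul_le_of_le_one_left (integral_nonneg (by linarith) fun s _ => (cosh_pos _).le)
      (exp_le_one_iff.2 (by linarith))
  have htail : exp (-q) * ∫ s in (r - 1)..r, cosh (lam * s)
      ≤ cosh (lam * (r - 1)) * ((1 - exp (-q)) / q) := by
    rw [← integral_exp_mul_sub hq.ne', ← integral_const_mul, ← integral_const_mul]
    refine integral_mono_on (by linarith) ((hint _ _).const_mul _)
      ((by fun_prop : Continuous fun s => exp (q * (s - r))).intervalIntegrable _ _ |>.const_mul _)
      fun s hs => ?_
    have hshift : 0 ≤ lam * (s - (r - 1)) := mul_nonneg hlam0 (by linarith [hs.1])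
    calc exp (-q) * cosh (lam * s)
        = exp (-q) * cosh (lam * (r - 1) + lam * (s - (r - 1))) := by ring_nf
      _ ≤ exp (-q) * (cosh (lam * (r - 1)) * exp (q * (s - (r - 1)))) := by
        gcongr
        refine (cosh_add_le_cosh_mul_exp _ hshift).trans ?_
        gcongr
        linarith [hs.1]
      _ = cosh (lam * (r - 1)) * exp (q * (s - r)) := by
        rw [mul_left_comm, ← exp_add]; ring_nf
  have hfrac : (1 - exp (-q)) / q ≤ 1 / q :=
    div_le_div_of_nonneg_right (by linarith [exp_pos (-q)]) hq.le
  rw [← integral_add_adjacent_intervals (hint 0 (r - 1)) (hint (r - 1) r), mul_add,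
    div_eq_mul_one_div]
  exact add_le_add hhead (htail.trans (mul_le_mul_of_nonneg_left hfrac (cosh_pos _).le))

theorem continuous_cosh_sub_cosh_rpow_mul_cosh {p : ℝ} (hp : 0 ≤ p) (lam r : ℝ) :
    Continuous fun s => (cosh r - cosh s) ^ p * cosh (lam * s) :=
  ((continuous_rpow_const hp).comp (by fun_prop)).mul (by fun_prop)

theorem rpow_mul_integral_cosh_mul_le_integral_head {p lam r : ℝ} (hp : 0 ≤ p) (hr : 1 ≤ r) :
    (sinh r * (1 - exp (-1)) ^ 2) ^ p * ∫ s in (0:ℝ)..(r - 1), cosh (lam * s)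
      ≤ ∫ s in (0:ℝ)..(r - 1), (cosh r - cosh s) ^ p * cosh (lam * s) := by
  rw [← integral_const_mul]
  refine integral_mono_on (by linarith)
    ((by fun_prop : Continuous fun s => cosh (lam * s)).intervalIntegrable _ _ |>.const_mul _)
    ((continuous_cosh_sub_cosh_rpow_mul_cosh hp lam r).intervalIntegrable _ _) fun s hs => ?_
  have hc : 0 ≤ 1 - exp (-1) := sub_nonneg.2 (exp_le_one_iff.2 (by norm_num))
  have hgap : 1 - exp (-1) ≤ 1 - exp (-(r - s)) :=
    sub_le_sub_left (exp_le_exp.2 (by linarith [hs.2])) 1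
  have hbase : sinh r * (1 - exp (-1)) ^ 2 ≤ cosh r - cosh s :=
    calc sinh r * (1 - exp (-1)) ^ 2 = sinh r * (1 - exp (-1)) * (1 - exp (-1)) := by ring
      _ ≤ sinh r * (1 - exp (-1)) * (1 - exp (-(r - s))) := by
        gcongr
      _ ≤ cosh r - cosh s :=
        sinh_mul_one_sub_exp_le_cosh_sub_cosh (by linarith [hs.2]) (by linarith [hs.1])
  gcongr

theorem rpow_mul_cosh_div_le_integral_tail {p lam r : ℝ} (hp : 0 ≤ p) (hlam : 0 ≤ lam)
    (hr : 1 ≤ r) :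
    (sinh r * (1 - exp (-1)) ^ 2) ^ p * (cosh (lam * (r - 1)) / (p + 1))
      ≤ ∫ s in (r - 1)..r, (cosh r - cosh s) ^ p * cosh (lam * s) := by
  rw [div_eq_mul_one_div, ← integral_sub_rpow (by linarith) r, ← integral_const_mul,
    ← integral_const_mul]
  refine integral_mono_on (by linarith)
    ((continuous_const.mul (continuous_const.mul
      ((continuous_rpow_const hp).comp (continuous_sub_left r)))).intervalIntegrable _ _)
    ((continuous_cosh_sub_cosh_rpow_mul_cosh hp lam r).intervalIntegrable _ _) fun s hs => ?_
  have hc : 0 ≤ 1 - exp (-1) := sub_nonneg.2 (exp_le_one_iff.2 (by norm_num))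
  have hK : 0 ≤ sinh r := sinh_nonneg_iff.2 (by linarith)
  have hrs : 0 ≤ r - s := by linarith [hs.2]
  have hbase : sinh r * (1 - exp (-1)) ^ 2 * (r - s) ≤ cosh r - cosh s :=
    calc sinh r * (1 - exp (-1)) ^ 2 * (r - s)
        = sinh r * (1 - exp (-1)) * ((1 - exp (-1)) * (r - s)) := by ring
      _ ≤ sinh r * (1 - exp (-1)) * (1 - exp (-(r - s))) := by
        gcongr
        exact one_sub_exp_neg_one_mul_le_one_sub_exp_neg hrs (by linarith [hs.1])
      _ ≤ cosh r - cosh s :=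
        sinh_mul_one_sub_exp_le_cosh_sub_cosh (by linarith [hs.2]) (by linarith [hs.1])
  have hcosh : cosh (lam * (r - 1)) ≤ cosh (lam * s) := by
    rw [cosh_le_cosh, abs_of_nonneg (mul_nonneg hlam (by linarith)),
      abs_of_nonneg (mul_nonneg hlam (by linarith [hs.1]))]
    exact mul_le_mul_of_nonneg_left hs.1 hlam
  calc (sinh r * (1 - exp (-1)) ^ 2) ^ p * (cosh (lam * (r - 1)) * (r - s) ^ p)
      = (sinh r * (1 - exp (-1)) ^ 2 * (r - s)) ^ p * cosh (lam * (r - 1)) := by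
        rw [mul_rpow (by positivity) hrs]; ring
    _ ≤ (cosh r - cosh s) ^ p * cosh (lam * s) := by
        gcongr
        exact rpow_nonneg ((mul_nonneg (mul_nonneg hK (sq_nonneg _)) hrs).trans hbase) p

theorem one_sub_two_mul_exp_neg_one_nonneg : 0 ≤ 1 - 2 * exp (-1) := by
  rw [exp_neg, sub_nonneg, ← div_eq_mul_inv, div_le_one (exp_pos 1)]
  linarith [add_one_le_exp 1]

theorem rpow_mul_integral_cosh_mul_le_integral {p lam r : ℝ} (hp : 0 ≤ p) (hlam0 : 0 ≤ lam)
    (hlam : lam ≤ p + 1) (hr : 1 ≤ r) :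
    sinh r ^ p * ((1 - 2 * exp (-1)) ^ p * (exp (-(p + 1)) * ∫ s in (0:ℝ)..r, cosh (lam * s)))
      ≤ ∫ s in (0:ℝ)..r, (cosh r - cosh s) ^ p * cosh (lam * s) := by
  have hK : 0 ≤ sinh r := sinh_nonneg_iff.2 (by linarith)
  have hc : 0 ≤ 1 - 2 * exp (-1) := one_sub_two_mul_exp_neg_one_nonneg
  have hcc : 1 - 2 * exp (-1) ≤ (1 - exp (-1)) ^ 2 := by nlinarith [sq_nonneg (exp (-1))]
  have hint : 0 ≤ exp (-(p + 1)) * ∫ s in (0:ℝ)..r, cosh (lam * s) :=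
    mul_nonneg (exp_pos _).le (integral_nonneg (by linarith) fun s _ => (cosh_pos _).le)
  have hg : ∀ a b, IntervalIntegrable (fun s => (cosh r - cosh s) ^ p * cosh (lam * s))
      MeasureTheory.volume a b :=
    (continuous_cosh_sub_cosh_rpow_mul_cosh hp lam r).intervalIntegrable
  rw [← integral_add_adjacent_intervals (hg 0 (r - 1)) (hg (r - 1) r), ← mul_assoc,
    ← mul_rpow hK hc]
  calc (sinh r * (1 - 2 * exp (-1))) ^ p * (exp (-(p + 1)) * ∫ s in (0:ℝ)..r, cosh (lam * s))
      ≤ (sinh r * (1 - exp (-1)) ^ 2) ^ p *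
          ((∫ s in (0:ℝ)..(r - 1), cosh (lam * s)) + cosh (lam * (r - 1)) / (p + 1)) := by
        gcongr
        exact exp_neg_mul_integral_cosh_mul_le (by linarith) hlam0 hlam hr
    _ ≤ _ := by
        rw [mul_add]
        exact add_le_add (rpow_mul_integral_cosh_mul_le_integral_head hp hr)
          (rpow_mul_cosh_div_le_integral_tail hp hlam0 hr)

theorem aconst_pos {n : ℕ} (hn : 2 ≤ n) : 0 < aconst n := by
  have hn' : (2:ℝ) ≤ n := by exact_mod_cast hn
  unfold aconst realBeta
  have := Gamma_pos_of_pos (show (0:ℝ) < ((n:ℝ) - 1) / 2 by linarith)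
  have := Gamma_pos_of_pos (show (0:ℝ) < 1 / 2 by norm_num)
  have := Gamma_pos_of_pos (show (0:ℝ) < ((n:ℝ) - 1) / 2 + 1 / 2 by linarith)
  positivity

theorem sphFnI_lower_bound (n : ℕ) (hn : 3 ≤ n) (lam r : ℝ)
    (hlam0 : 0 ≤ lam) (hlam : lam ≤ ((n:ℝ) - 1) / 2) (hr : 1 < r) :
    aconst n * Real.exp (-((n:ℝ) - 1) / 2) * (1 - 2 * Real.exp (-1)) ^ (((n:ℝ) - 3) / 2) *
        ((if lam = 0 then r else Real.sinh (lam * r) / lam) / Real.sinh r ^ (((n:ℝ) - 1) / 2))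
      ≤ sphFnI n lam r := by
  have hn' : (3:ℝ) ≤ n := by exact_mod_cast hn
  have hK : 0 < sinh r := sinh_pos_iff.2 (by linarith)
  set p : ℝ := ((n:ℝ) - 3) / 2 with hp
  have hq : ((n:ℝ) - 1) / 2 = p + 1 := by rw [hp]; ring
  have hpow : sinh r ^ ((2:ℝ) - n) * sinh r ^ p = (sinh r ^ (p + 1))⁻¹ := by
    rw [← rpow_add hK, ← rpow_neg hK.le, hp]; ring_nf
  rw [sphFnI, ← integral_cosh_mul, neg_div, hq]
  calc _ = aconst n * sinh r ^ ((2:ℝ) - n) * (sinh r ^ p *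
          ((1 - 2 * exp (-1)) ^ p * (exp (-(p + 1)) * ∫ s in (0:ℝ)..r, cosh (lam * s)))) := by
        rw [div_eq_mul_inv, ← hpow]; ring
    _ ≤ _ := by
        gcongr
        · exact mul_nonneg (aconst_pos (by omega)).le (rpow_nonneg hK.le _)
        · exact rpow_mul_integral_cosh_mul_le_integral (by linarith) hlam0 (by linarith) hr.le
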